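/- Let $k \ge 2$, $0 \le i \le k-1$, and $n \ge 3k+2$. Then $S/((I(P_n^k), A_{n-k+i-1}) : x_{n-k+i}) \cong \big(K[x_1,\dots,x_{n-2k-1+i}]/I(P_{n-2k-1+i}^k)\big)[x_{n-k+i}]$, where $A_{n-k+i-1} = (x_{n-k},\dots,x_{n-k+i-1})$ (with $A_{n-k-1} = (0)$). -/

import Mathlib

open MvPolynomial

/-- The edge ideal of the `k`-th power of the path on `n` vertices in
`S = K[x_1,…,x_n]` (the variable `X t` for `t : Fin n` is `x_{t+1}` in 1-based labels):
generated by the `x_i x_j` with `0 < j - i ≤ k`. -/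
noncomputable def pathIdeal (K : Type*) [Field K] (n k : ℕ) :
    Ideal (MvPolynomial (Fin n) K) :=
  Ideal.span {m | ∃ i j : Fin n, (i : ℕ) < j ∧ (j : ℕ) - i ≤ k ∧ m = X i * X j}

/-- The edge ideal of the `k`-th power of the cycle on `n` vertices in `K[x_1,…,x_n]`. -/
noncomputable def cycleIdeal (K : Type*) [Field K] (n k : ℕ) :
    Ideal (MvPolynomial (Fin n) K) :=
  Ideal.span {m | ∃ i j : Fin n, (i : ℕ) < j ∧ ((j : ℕ) - i ≤ k ∨ n - k ≤ (j : ℕ) - i) ∧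
    m = X i * X j}

/-- The edge ideal, regarded in `K[x_1,…,x_n]`, of the `k`-th power of the path on the
consecutive vertices with 1-based labels `a,…,b`. -/
noncomputable def pathIdealOn (K : Type*) [Field K] (n k a b : ℕ) :
    Ideal (MvPolynomial (Fin n) K) :=
  Ideal.span {m | ∃ i j : Fin n, a ≤ (i : ℕ) + 1 ∧ (j : ℕ) + 1 ≤ b ∧ (i : ℕ) < j ∧
    (j : ℕ) - i ≤ k ∧ m = X i * X j}

/-- The monomial prime ideal `(x_a, x_{a+1}, …, x_b)` of `K[x_1,…,x_n]` (1-based labels). -/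
noncomputable def varSpan (K : Type*) [Field K] (n a b : ℕ) :
    Ideal (MvPolynomial (Fin n) K) :=
  Ideal.span {m | ∃ t : Fin n, a ≤ (t : ℕ) + 1 ∧ (t : ℕ) + 1 ≤ b ∧ m = X t}

/-- The depth of `S/I` with respect to the maximal graded ideal `(x_1,…,x_n)`:
the supremum of lengths of (weakly) regular sequences on `S/I` from `(x_1,…,x_n)`. -/
noncomputable def pdepth {K : Type*} [Field K] {n : ℕ} (I : Ideal (MvPolynomial (Fin n) K)) :
    ℕ∞ :=
  sSup {d : ℕ∞ | ∃ rs : List (MvPolynomial (Fin n) K),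
    (∀ r ∈ rs, r ∈ Ideal.span (Set.range (X (R := K) (σ := Fin n)))) ∧
    RingTheory.Sequence.IsWeaklyRegular (MvPolynomial (Fin n) K ⧸ I) rs ∧
    (rs.length : ℕ∞) = d}

/-- The set of exponent vectors of monomials belonging to a (monomial) ideal `I`. -/
def monSet {K : Type*} [Field K] {n : ℕ} (I : Ideal (MvPolynomial (Fin n) K)) :
    Set (Fin n → ℕ) :=
  {a | (∏ i, X i ^ a i : MvPolynomial (Fin n) K) ∈ I}

/-- The set of exponent vectors of the monomials of the Stanley space `x^a K[W]`. -/
def stanleyInterval {n : ℕ} (a : Fin n → ℕ) (W : Finset (Fin n)) : Set (Fin n → ℕ) :=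
  {c | (∀ i, a i ≤ c i) ∧ ∀ i ∉ W, c i = a i}

/-- The Stanley depth of `J/I` for monomial ideals `I ⊆ J` of `K[x_1,…,x_n]`: the largest
`d` such that the monomials of `J \ I` can be partitioned into finitely many Stanley spaces
`x^a K[W]` with `|W| ≥ d` (by Herzog–Vladoiu–Zheng this agrees with the Stanley depth of the
`ℤⁿ`-graded module `J/I` defined via Stanley decompositions). -/
noncomputable def sdepthQuot {K : Type*} [Field K] {n : ℕ}
    (I J : Ideal (MvPolynomial (Fin n) K)) : ℕ :=
  sSup {d : ℕ | ∃ P : Finset ((Fin n → ℕ) × Finset (Fin n)),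
    (∀ p ∈ P, d ≤ p.2.card) ∧
    ∀ c : Fin n → ℕ, (c ∈ monSet J ∧ c ∉ monSet I) ↔
      ∃! p, p ∈ P ∧ c ∈ stanleyInterval p.1 p.2}

/-!
With `v = n - k + i`, colon by `x_v` turns an ideal "edges plus variables" into the same kind of
ideal: the edges through `v` become the variables of the neighbours of `v`. Those neighbours,
together with the variables of `A_{n-k+i-1}`, are exactly `x_t` for `n - 2k + i ≤ t ≤ n`, `t ≠ v`;
every edge meeting them is then redundant, and what survives is `I(P_{n-2k-1+i}^k)` on the first
`n - 2k - 1 + i` variables. Killing the other variables leaves that quotient with `x_v` adjoined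
freely.
-/

theorem Finsupp.tsub_single_of_apply_eq_zero {σ : Type*} {e : σ →₀ ℕ} {v : σ} (h : e v = 0) :
    e - Finsupp.single v 1 = e := by
  ext t
  by_cases ht : t = v <;> simp [ht, h]

section EdgeIdeal

variable {R σ : Type*} [CommSemiring R]

variable (R) in
noncomputable def edgeIdeal (r : σ → σ → Prop) : Ideal (MvPolynomial σ R) :=
  Ideal.span {f | ∃ p q, r p q ∧ f = X p * X q}

def edgeVarExponents (r : σ → σ → Prop) (W : Set σ) : Set (σ →₀ ℕ) :=
  {e | ∃ p q, r p q ∧ e = Finsupp.single p 1 + Finsupp.single q 1} ∪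
    (fun t => Finsupp.single t 1) '' W

theorem edgeIdeal_sup_span_X_eq_span_monomial (r : σ → σ → Prop) (W : Set σ) :
    edgeIdeal R r ⊔ Ideal.span (X '' W) =
      Ideal.span ((fun e => monomial e (1 : R)) '' edgeVarExponents r W) := by
  rw [edgeIdeal, ← Ideal.span_union, edgeVarExponents, Set.image_union, Set.image_image]
  congr 1
  ext f
  simp [X, monomial_mul, eq_comm]

theorem colon_span_X_span_monomial (S : Set (σ →₀ ℕ)) (v : σ) :
    (Ideal.span ((fun e => monomial e (1 : R)) '' S)).colon
        (Ideal.span {X v} : Ideal (MvPolynomial σ R)) =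
      Ideal.span ((fun e => monomial e (1 : R)) '' ((· - Finsupp.single v 1) '' S)) := by
  ext f
  simp only [Ideal.mem_colon_span_singleton, mem_ideal_span_monomial_image, support_mul_X,
    Finset.mem_map, addRightEmbedding_apply, Set.exists_mem_image, tsub_le_iff_right,
    forall_exists_index, and_imp, forall_apply_eq_imp_iff₂]

theorem image_tsub_single_edgeVarExponents {r : σ → σ → Prop} {W : Set σ} {v : σ}
    (hv : v ∉ W) :
    (· - Finsupp.single v 1) '' edgeVarExponents r W =
      edgeVarExponents (fun p q => r p q ∧ p ≠ v ∧ q ≠ v) (W ∪ {t | r t v ∨ r v t}) := by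
  have single_tsub {t : σ} (ht : t ≠ v) : Finsupp.single t 1 - Finsupp.single v 1 =
      Finsupp.single t 1 :=
    Finsupp.tsub_single_of_apply_eq_zero (by simp [Ne.symm ht])
  ext e
  constructor
  · rintro ⟨_, ⟨p, q, hpq, rfl⟩ | ⟨t, ht, rfl⟩, rfl⟩
    · by_cases hp : p = v
      · subst hp
        exact Or.inr ⟨q, Or.inr (Or.inr hpq), (add_tsub_cancel_left _ _).symm⟩
      by_cases hq : q = v
      · subst hq
        exact Or.inr ⟨p, Or.inr (Or.inl hpq), (add_tsub_cancel_right _ _).symm⟩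
      exact Or.inl ⟨p, q, ⟨hpq, hp, hq⟩,
        Finsupp.tsub_single_of_apply_eq_zero (by simp [Ne.symm hp, Ne.symm hq])⟩
    · exact Or.inr ⟨t, Or.inl ht, (single_tsub (ne_of_mem_of_not_mem ht hv)).symm⟩
  · rintro (⟨p, q, ⟨hpq, hp, hq⟩, rfl⟩ | ⟨t, ht | ht | ht, rfl⟩)
    · exact ⟨_, Or.inl ⟨p, q, hpq, rfl⟩,
        Finsupp.tsub_single_of_apply_eq_zero (by simp [Ne.symm hp, Ne.symm hq])⟩
    · exact ⟨_, Or.inr ⟨t, ht, rfl⟩, single_tsub (ne_of_mem_of_not_mem ht hv)⟩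
    · exact ⟨_, Or.inl ⟨t, v, ht, rfl⟩, add_tsub_cancel_right _ _⟩
    · exact ⟨_, Or.inl ⟨v, t, ht, rfl⟩, add_tsub_cancel_left _ _⟩

theorem colon_edgeIdeal_sup_span_X (r : σ → σ → Prop) {W : Set σ} {v : σ} (hv : v ∉ W) :
    (edgeIdeal R r ⊔ Ideal.span (X '' W)).colon
        (Ideal.span {X v} : Ideal (MvPolynomial σ R)) =
      edgeIdeal R (fun p q => r p q ∧ p ≠ v ∧ q ≠ v) ⊔
        Ideal.span (X '' (W ∪ {t | r t v ∨ r v t})) := by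
  rw [edgeIdeal_sup_span_X_eq_span_monomial, colon_span_X_span_monomial,
    image_tsub_single_edgeVarExponents hv, edgeIdeal_sup_span_X_eq_span_monomial]

theorem edgeIdeal_le_sup_span_X {r r' : σ → σ → Prop} {W : Set σ}
    (h : ∀ p q, r p q → p ∉ W → q ∉ W → r' p q) :
    edgeIdeal R r ≤ edgeIdeal R r' ⊔ Ideal.span (X '' W) := by
  refine Ideal.span_le.mpr ?_
  rintro _ ⟨p, q, hpq, rfl⟩
  by_cases hp : p ∈ W
  · exact Ideal.mem_sup_right (Ideal.mul_mem_right _ _ (Ideal.subset_span ⟨p, hp, rfl⟩))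
  by_cases hq : q ∈ W
  · exact Ideal.mem_sup_right (Ideal.mul_mem_left _ _ (Ideal.subset_span ⟨q, hq, rfl⟩))
  exact Ideal.mem_sup_left (Ideal.subset_span ⟨p, q, h p q hpq hp hq, rfl⟩)

theorem edgeIdeal_sup_span_X_congr {r r' : σ → σ → Prop} {W : Set σ}
    (h : ∀ p q, p ∉ W → q ∉ W → (r p q ↔ r' p q)) :
    edgeIdeal R r ⊔ Ideal.span (X '' W) = edgeIdeal R r' ⊔ Ideal.span (X '' W) :=
  le_antisymm
    (sup_le (edgeIdeal_le_sup_span_X fun p q hpq hp hq => (h p q hp hq).mp hpq) le_sup_right)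
    (sup_le (edgeIdeal_le_sup_span_X fun p q hpq hp hq => (h p q hp hq).mpr hpq) le_sup_right)

theorem map_rename_edgeIdeal {τ : Type*} (f : τ → σ) (r : τ → τ → Prop) :
    (edgeIdeal R r).map (rename f) =
      edgeIdeal R (fun p q => ∃ a b, r a b ∧ f a = p ∧ f b = q) := by
  rw [edgeIdeal, edgeIdeal, Ideal.map_span]
  congr 1
  ext g
  simp only [Set.mem_image, Set.mem_ofPred_eq]
  constructor
  · rintro ⟨_, ⟨a, b, hab, rfl⟩, rfl⟩
    exact ⟨f a, f b, ⟨a, b, hab, rfl, rfl⟩, by simp⟩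
  · rintro ⟨_, _, ⟨a, b, hab, rfl, rfl⟩, rfl⟩
    exact ⟨_, ⟨a, b, hab, rfl⟩, by simp⟩

end EdgeIdeal

theorem Ideal.Quotient.liftₐ_mk {R A B : Type*} [CommSemiring R] [CommRing A] [Algebra R A]
    [Semiring B] [Algebra R B] (I : Ideal A) (f : A →ₐ[R] B) (hI : ∀ a ∈ I, f a = 0) (a : A) :
    Ideal.Quotient.liftₐ I f hI (Ideal.Quotient.mk I a) = f a :=
  Ideal.Quotient.lift_mk I (f : A →+* B) hI

section AdjoinOneVariable

open Polynomial (CAlgHom)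

variable {R σ τ : Type*} [CommRing R] {f : τ → σ} {v : σ} (I : Ideal (MvPolynomial τ R))

variable (f v) in
noncomputable def ofPolynomialQuotient :
    Polynomial (MvPolynomial τ R ⧸ I) →ₐ[R]
      MvPolynomial σ R ⧸ (I.map (rename f) ⊔ Ideal.span (X '' (insert v (Set.range f))ᶜ)) :=
  Polynomial.eval₂AlgHom
    (Ideal.Quotient.liftₐ I ((Ideal.Quotient.mkₐ R _).comp (rename f)) fun _ hx =>
      Ideal.Quotient.eq_zero_iff_mem.mpr (Ideal.mem_sup_left (Ideal.mem_map_of_mem _ hx)))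
    (Ideal.Quotient.mk _ (X v)) fun _ => Commute.all _ _

theorem ofPolynomialQuotient_C (x : MvPolynomial τ R) :
    ofPolynomialQuotient f v I (Polynomial.C (Ideal.Quotient.mk I x)) =
      Ideal.Quotient.mk _ (rename f x) := by
  simp only [ofPolynomialQuotient, Polynomial.eval₂AlgHom_apply, Polynomial.eval₂_C]
  rfl

theorem ofPolynomialQuotient_X :
    ofPolynomialQuotient f v I Polynomial.X = Ideal.Quotient.mk _ (X v) := by
  simp [ofPolynomialQuotient]

variable [DecidableEq σ]

variable (f v) in
noncomputable def toPolynomialQuotient :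
    MvPolynomial σ R →ₐ[R] Polynomial (MvPolynomial τ R ⧸ I) :=
  aeval (Function.extend f (fun a => Polynomial.C (Ideal.Quotient.mk I (X a)))
    (Pi.single v Polynomial.X))

theorem toPolynomialQuotient_comp_rename (hf : f.Injective) :
    (toPolynomialQuotient f v I).comp (rename f) = CAlgHom.comp (Ideal.Quotient.mkₐ R I) := by
  ext a : 2
  simp [toPolynomialQuotient, hf.extend_apply]

theorem toPolynomialQuotient_X_apply (hf : f.Injective) (a : τ) :
    toPolynomialQuotient f v I (X (f a)) = Polynomial.C (Ideal.Quotient.mk I (X a)) := by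
  simpa using congr($(toPolynomialQuotient_comp_rename I (v := v) hf) (X a))

theorem toPolynomialQuotient_X_self (hv : v ∉ Set.range f) :
    toPolynomialQuotient f v I (X v) = Polynomial.X := by
  simp [toPolynomialQuotient, Function.extend_apply' _ _ _ hv]

theorem toPolynomialQuotient_X_of_notMem {t : σ} (ht : t ∉ Set.range f) (htv : t ≠ v) :
    toPolynomialQuotient f v I (X t) = 0 := by
  simp [toPolynomialQuotient, Function.extend_apply' _ _ _ ht, htv]

theorem map_rename_sup_span_X_le_ker (hf : f.Injective) :
    I.map (rename f) ⊔ Ideal.span (X '' (insert v (Set.range f))ᶜ) ≤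
      RingHom.ker (toPolynomialQuotient f v I) := by
  refine sup_le (Ideal.map_le_iff_le_comap.mpr fun x hx => ?_) (Ideal.span_le.mpr ?_)
  · simpa [Ideal.Quotient.eq_zero_iff_mem.mpr hx] using
      congr($(toPolynomialQuotient_comp_rename I (v := v) hf) x)
  · rintro _ ⟨t, ht, rfl⟩
    simp only [Set.mem_compl_iff, Set.mem_insert_iff, not_or] at ht
    exact toPolynomialQuotient_X_of_notMem I ht.2 ht.1

variable (f v) in
noncomputable def liftToPolynomialQuotient (hf : f.Injective) :
    (MvPolynomial σ R ⧸ (I.map (rename f) ⊔ Ideal.span (X '' (insert v (Set.range f))ᶜ))) →ₐ[R]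
      Polynomial (MvPolynomial τ R ⧸ I) :=
  Ideal.Quotient.liftₐ _ (toPolynomialQuotient f v I) fun _ hx =>
    RingHom.mem_ker.mp (map_rename_sup_span_X_le_ker I hf hx)

theorem liftToPolynomialQuotient_mk (hf : f.Injective) (x : MvPolynomial σ R) :
    liftToPolynomialQuotient f v I hf (Ideal.Quotient.mk _ x) = toPolynomialQuotient f v I x :=
  Ideal.Quotient.liftₐ_mk _ _ _ x

theorem liftToPolynomialQuotient_comp_ofPolynomialQuotient (hf : f.Injective)
    (hv : v ∉ Set.range f) :
    (liftToPolynomialQuotient f v I hf).comp (ofPolynomialQuotient f v I) = AlgHom.id R _ := by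
  refine Polynomial.algHom_ext' (Ideal.Quotient.algHom_ext _ (algHom_ext fun a => ?_)) ?_
  · change liftToPolynomialQuotient f v I hf
      (ofPolynomialQuotient f v I (Polynomial.C (Ideal.Quotient.mk I (X a)))) =
        Polynomial.C (Ideal.Quotient.mk I (X a))
    rw [ofPolynomialQuotient_C, liftToPolynomialQuotient_mk, rename_X,
      toPolynomialQuotient_X_apply I hf]
  · change liftToPolynomialQuotient f v I hf (ofPolynomialQuotient f v I Polynomial.X) =
      Polynomial.X
    rw [ofPolynomialQuotient_X, liftToPolynomialQuotient_mk, toPolynomialQuotient_X_self I hv]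

theorem ofPolynomialQuotient_comp_liftToPolynomialQuotient (hf : f.Injective)
    (hv : v ∉ Set.range f) :
    (ofPolynomialQuotient f v I).comp (liftToPolynomialQuotient f v I hf) = AlgHom.id R _ := by
  refine Ideal.Quotient.algHom_ext _ (algHom_ext fun t => ?_)
  change ofPolynomialQuotient f v I (liftToPolynomialQuotient f v I hf
    (Ideal.Quotient.mk _ (X t))) = Ideal.Quotient.mk _ (X t)
  rw [liftToPolynomialQuotient_mk]
  by_cases ht : t ∈ Set.range f
  · obtain ⟨a, rfl⟩ := ht
    rw [toPolynomialQuotient_X_apply I hf, ofPolynomialQuotient_C, rename_X]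
  by_cases htv : t = v
  · rw [htv, toPolynomialQuotient_X_self I hv, ofPolynomialQuotient_X]
  rw [toPolynomialQuotient_X_of_notMem I ht htv, map_zero, eq_comm,
    Ideal.Quotient.eq_zero_iff_mem]
  exact Ideal.mem_sup_right (Ideal.subset_span ⟨t, by simp [ht, htv], rfl⟩)

noncomputable def quotientEquivPolynomial (hf : f.Injective) (hv : v ∉ Set.range f) :
    (MvPolynomial σ R ⧸ (I.map (rename f) ⊔ Ideal.span (X '' (insert v (Set.range f))ᶜ))) ≃ₐ[R]
      Polynomial (MvPolynomial τ R ⧸ I) :=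
  AlgEquiv.ofAlgHom (liftToPolynomialQuotient f v I hf) (ofPolynomialQuotient f v I)
    (liftToPolynomialQuotient_comp_ofPolynomialQuotient I hf hv)
    (ofPolynomialQuotient_comp_liftToPolynomialQuotient I hf hv)

end AdjoinOneVariable

section PathPower

variable {K : Type*} [Field K]

theorem pathIdeal_eq_edgeIdeal (n k : ℕ) :
    pathIdeal K n k = edgeIdeal K (fun p q : Fin n => (p : ℕ) < q ∧ (q : ℕ) - p ≤ k) := by
  simp only [pathIdeal, edgeIdeal, and_assoc]

theorem varSpan_eq_span_X_image (n a b : ℕ) :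
    varSpan K n a b = Ideal.span (X '' {t : Fin n | a ≤ (t : ℕ) + 1 ∧ (t : ℕ) + 1 ≤ b}) := by
  simp only [varSpan, Set.image, Set.mem_ofPred_eq, and_assoc, eq_comm]

theorem map_rename_castLE_pathIdeal {m n : ℕ} (h : m ≤ n) (k : ℕ) :
    (pathIdeal K m k).map (rename (Fin.castLE h)) =
      edgeIdeal K (fun p q : Fin n => (p : ℕ) < q ∧ (q : ℕ) - p ≤ k ∧ (q : ℕ) < m) := by
  rw [pathIdeal_eq_edgeIdeal, map_rename_edgeIdeal]
  congr
  ext p q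
  constructor
  · rintro ⟨a, b, ⟨hab, hk⟩, rfl, rfl⟩
    exact ⟨hab, hk, b.isLt⟩
  · rintro ⟨hpq, hk, hq⟩
    exact ⟨⟨p, by omega⟩, ⟨q, hq⟩, ⟨hpq, hk⟩, rfl, rfl⟩

theorem colon_pathIdeal_sup_varSpan {n k i : ℕ} (hi : i ≤ k) (hn : 2 * k + 1 ≤ n) (v : Fin n)
    (hv : (v : ℕ) = n - k + i - 1) :
    (pathIdeal K n k ⊔ varSpan K n (n - k) (n - k + i - 1)).colon
        ((Ideal.span {X v} : Ideal (MvPolynomial (Fin n) K)) : Set (MvPolynomial (Fin n) K)) =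
      (pathIdeal K (n - 2 * k - 1 + i) k).map (rename (Fin.castLE (by omega))) ⊔
        Ideal.span
          (X '' (insert v (Set.range (Fin.castLE (n := n - 2 * k - 1 + i) (by omega))))ᶜ) := by
  rw [pathIdeal_eq_edgeIdeal, varSpan_eq_span_X_image,
    colon_edgeIdeal_sup_span_X _ (by simp only [Set.mem_ofPred_eq]; omega),
    map_rename_castLE_pathIdeal, Fin.range_castLE]
  have hW : {t : Fin n | n - k ≤ (t : ℕ) + 1 ∧ (t : ℕ) + 1 ≤ n - k + i - 1} ∪
      {t | (t : ℕ) < v ∧ (v : ℕ) - t ≤ k ∨ (v : ℕ) < t ∧ (t : ℕ) - v ≤ k} =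
        (insert v {t : Fin n | (t : ℕ) < n - 2 * k - 1 + i})ᶜ := by
    ext t
    simp only [Set.mem_union, Set.mem_ofPred_eq, Set.mem_compl_iff, Set.mem_insert_iff,
      Fin.ext_iff]
    omega
  rw [hW]
  refine edgeIdeal_sup_span_X_congr fun p q hp hq => ?_
  simp only [Set.mem_compl_iff, Set.mem_insert_iff, Set.mem_ofPred_eq, not_or,
    Fin.ext_iff] at hp hq
  omega

end PathPower

theorem stmt7 (K : Type*) [Field K] (n k i : ℕ) (hi : i ≤ k - 1)
    (hn : 3 * k + 2 ≤ n) :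
    Nonempty ((MvPolynomial (Fin n) K ⧸
        ((pathIdeal K n k ⊔ varSpan K n (n - k) (n - k + i - 1)).colon
          ((Ideal.span {X (⟨n - k + i - 1, by omega⟩ : Fin n)} : Ideal (MvPolynomial (Fin n) K)) :
            Set (MvPolynomial (Fin n) K)))) ≃+*
      Polynomial (MvPolynomial (Fin (n - 2 * k - 1 + i)) K ⧸
        pathIdeal K (n - 2 * k - 1 + i) k)) := by
  rw [colon_pathIdeal_sup_varSpan (by omega) (by omega) _ rfl]
  exact ⟨(quotientEquivPolynomial _ (Fin.castLE_injective _)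
    (by simp only [Fin.range_castLE, Set.mem_ofPred_eq]; omega)).toRingEquiv⟩
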